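/- arXiv:alg-geom/9703012 — 3 statements merged into one kernel-verified Lean document; each statement's English description precedes it below -/
import Mathlib

section
/- Let e and f be finite types (with decidable equality), let S be an e × f matrix and T an f × e matrix with complex entries, and set V := (∑_{k≥0} ((2πi)^{k+1}/(k+1)!) • (S*T)^k) * S, an e × f matrix. Then V * T = exp((2πi) • (S*T)) − 1 (an identity of e × e matrices) and T * V = exp((2πi) • (T*S)) − 1 (an identity of f × f matrices). -/
open NormedSpace Real

private lemma verdier_summable_aux {n : Type*} [Fintype n] [DecidableEq n]
    (c : ℂ) (M : Matrix n n ℂ) :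
    Summable fun k : ℕ => (c ^ (k + 1) / (Nat.factorial (k + 1) : ℂ)) • M ^ k := by
  letI : SeminormedRing (Matrix n n ℂ) := Matrix.linftyOpSemiNormedRing
  letI : NormedRing (Matrix n n ℂ) := Matrix.linftyOpNormedRing
  letI : NormedAlgebra ℂ (Matrix n n ℂ) := Matrix.linftyOpNormedAlgebra
  set B : ℝ := max 1 ‖(1 : Matrix n n ℂ)‖ with hB
  have hB1 : (1 : ℝ) ≤ B := le_max_left _ _
  have hpow : ∀ k : ℕ, ‖M ^ k‖ ≤ B * ‖M‖ ^ k := by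
    intro k
    induction k with
    | zero =>
        rw [pow_zero, pow_zero, mul_one]
        exact le_max_right 1 ‖(1 : Matrix n n ℂ)‖
    | succ k ih =>
      calc ‖M ^ (k + 1)‖ = ‖M ^ k * M‖ := by rw [pow_succ]
        _ ≤ ‖M ^ k‖ * ‖M‖ := norm_mul_le _ _
        _ ≤ (B * ‖M‖ ^ k) * ‖M‖ := by
            exact mul_le_mul_of_nonneg_right ih (norm_nonneg _)
        _ = B * ‖M‖ ^ (k + 1) := by ring
  apply Summable.of_norm
  have hs : Summable fun k : ℕ => (‖c‖ * B) * ((‖c‖ * ‖M‖) ^ k / (Nat.factorial k : ℝ)) :=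
    (Real.summable_pow_div_factorial _).mul_left _
  refine hs.of_nonneg_of_le (fun k => norm_nonneg _) (fun k => ?_)
  rw [norm_smul, norm_div, norm_pow, Complex.norm_natCast]
  calc ‖c‖ ^ (k + 1) / (Nat.factorial (k + 1) : ℝ) * ‖M ^ k‖
      ≤ ‖c‖ ^ (k + 1) / (Nat.factorial k : ℝ) * (B * ‖M‖ ^ k) := by
        gcongr <;> first
          | exact Nat.le_succ k
          | exact hpow k
    _ = (‖c‖ * B) * ((‖c‖ * ‖M‖) ^ k / (Nat.factorial k : ℝ)) := by
        rw [mul_pow, pow_succ]; ring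

private lemma verdier_tsum_aux {n : Type*} [Fintype n] [DecidableEq n]
    (c : ℂ) (M : Matrix n n ℂ) :
    ∑' k : ℕ, (c ^ (k + 1) / (Nat.factorial (k + 1) : ℂ)) • M ^ (k + 1)
      = exp (c • M) - 1 := by
  letI : SeminormedRing (Matrix n n ℂ) := Matrix.linftyOpSemiNormedRing
  letI : NormedRing (Matrix n n ℂ) := Matrix.linftyOpNormedRing
  letI : NormedAlgebra ℂ (Matrix n n ℂ) := Matrix.linftyOpNormedAlgebra
  have hg : Summable fun m : ℕ => ((Nat.factorial m : ℂ)⁻¹) • (c • M) ^ m :=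
    expSeries_summable' (𝕂 := ℂ) (c • M)
  have heq : ∀ k : ℕ,
      (c ^ (k + 1) / (Nat.factorial (k + 1) : ℂ)) • M ^ (k + 1)
        = ((Nat.factorial (k + 1) : ℂ)⁻¹) • (c • M) ^ (k + 1) := by
    intro k
    rw [smul_pow, smul_smul]
    congr 1
    rw [div_eq_mul_inv, mul_comm]
  simp_rw [heq]
  have hexp : exp (c • M) = ∑' m : ℕ, ((Nat.factorial m : ℂ)⁻¹) • (c • M) ^ m := by
    rw [exp_eq_tsum (𝕂 := ℂ)]
  rw [hexp, hg.tsum_eq_zero_add]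
  simp

/-- For an `e × f` complex matrix `S` and an `f × e` complex matrix `T`, the matrix
`V = (∑_{k ≥ 0} ((2πi)^(k+1)/(k+1)!) • (S*T)^k) * S` satisfies the monodromy relations
`V * T = exp((2πi) • (S*T)) - 1` and `T * V = exp((2πi) • (T*S)) - 1`. -/
theorem verdier_monodromy_relations
    {e f : Type*} [Fintype e] [Fintype f] [DecidableEq e] [DecidableEq f]
    (S : Matrix e f ℂ) (T : Matrix f e ℂ)
    (V : Matrix e f ℂ)
    (hV : V = (∑' k : ℕ,
      ((2 * π * Complex.I) ^ (k + 1) / (Nat.factorial (k + 1) : ℂ)) • (S * T) ^ k) * S) :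
    V * T = exp ((2 * π * Complex.I : ℂ) • (S * T)) - 1 ∧
    T * V = exp ((2 * π * Complex.I : ℂ) • (T * S)) - 1 := by
  set c : ℂ := 2 * π * Complex.I with hc
  have hsum : Summable fun k : ℕ =>
      (c ^ (k + 1) / (Nat.factorial (k + 1) : ℂ)) • (S * T) ^ k :=
    verdier_summable_aux c (S * T)
  have hcomm : ∀ k : ℕ, T * (S * T) ^ k = (T * S) ^ k * T := by
    intro k
    induction k with
    | zero => simp
    | succ k ih =>
      simp only [pow_succ', Matrix.mul_assoc, ih]
  constructor
  · rw [hV, Matrix.mul_assoc, ← hsum.tsum_mul_right]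
    rw [← verdier_tsum_aux c (S * T)]
    congr 1
    funext k
    rw [smul_mul_assoc, ← pow_succ]
  · -- T * V
    let L : Matrix e e ℂ →ₗ[ℂ] Matrix f f ℂ :=
      { toFun := fun X => T * X * S
        map_add' := by intros; simp [Matrix.mul_add, Matrix.add_mul]
        map_smul' := by intros; simp [Matrix.mul_smul, Matrix.smul_mul] }
    have hL : T * V = (LinearMap.toContinuousLinearMap L) (∑' k : ℕ,
        (c ^ (k + 1) / (Nat.factorial (k + 1) : ℂ)) • (S * T) ^ k) := by
      rw [hV, ← Matrix.mul_assoc]; rfl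
    rw [hL, (LinearMap.toContinuousLinearMap L).map_tsum hsum]
    have hterm : ∀ k : ℕ,
        (LinearMap.toContinuousLinearMap L)
            ((c ^ (k + 1) / (Nat.factorial (k + 1) : ℂ)) • (S * T) ^ k)
          = (c ^ (k + 1) / (Nat.factorial (k + 1) : ℂ)) • (T * S) ^ (k + 1) := by
      intro k
      show T * ((c ^ (k + 1) / (Nat.factorial (k + 1) : ℂ)) • (S * T) ^ k) * S = _
      rw [Matrix.mul_smul, Matrix.smul_mul]
      congr 1
      rw [Matrix.mul_assoc, ← Matrix.mul_assoc, hcomm k, Matrix.mul_assoc, pow_succ]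
    simp_rw [hterm]
    exact verdier_tsum_aux c (T * S)
end

section
/- Let n be a finite type (with decidable equality) and let A be an n × n matrix with complex entries. Suppose that for all μ and ν in the spectrum of A (over ℂ) and every nonzero integer k, one has μ − ν ≠ 2πik. Then the matrix exponential map exp : Matrix n n ℂ → Matrix n n ℂ is Fréchet differentiable at A and its derivative at A is bijective; that is, there exists a continuous linear equivalence D of Matrix n n ℂ with itself such that exp has Fréchet derivative D at A. -/
open NormedSpace Real

attribute [local instance] Matrix.linftyOpNormedRing Matrix.linftyOpNormedAlgebra

namespace ExpDerivAux

open Polynomial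

variable {n : Type*} [Fintype n] [DecidableEq n]

@[reducible] noncomputable def matTop : TopologicalSpace (Matrix n n ℂ) :=
  (inferInstance : SeminormedAddCommGroup (Matrix n n ℂ)).toUniformSpace.toTopologicalSpace

attribute [local instance] matTop

noncomputable def mulL (B : Matrix n n ℂ) : Matrix n n ℂ →L[ℂ] Matrix n n ℂ :=
  ContinuousLinearMap.mul ℂ (Matrix n n ℂ) B

noncomputable def mulR (B : Matrix n n ℂ) : Matrix n n ℂ →L[ℂ] Matrix n n ℂ :=
  (ContinuousLinearMap.mul ℂ (Matrix n n ℂ)).flip B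

@[simp] lemma mulL_apply (B H : Matrix n n ℂ) : mulL B H = B * H := rfl
@[simp] lemma mulR_apply (B H : Matrix n n ℂ) : mulR B H = H * B := rfl

lemma mulL_one : mulL (1 : Matrix n n ℂ) = 1 := by
  ext H : 1; simp [ContinuousLinearMap.one_apply]

lemma mulR_one : mulR (1 : Matrix n n ℂ) = 1 := by
  ext H : 1; simp [ContinuousLinearMap.one_apply]

lemma mulL_add (B C : Matrix n n ℂ) : mulL (B + C) = mulL B + mulL C := by
  ext H : 1; simp [add_mul]

lemma mulR_add (B C : Matrix n n ℂ) : mulR (B + C) = mulR B + mulR C := by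
  ext H : 1; simp [mul_add]

lemma mulL_sub (B C : Matrix n n ℂ) : mulL (B - C) = mulL B - mulL C := by
  ext H : 1; simp [sub_mul]

lemma mulR_sub (B C : Matrix n n ℂ) : mulR (B - C) = mulR B - mulR C := by
  ext H : 1; simp [mul_sub]

lemma mulL_mul (B C : Matrix n n ℂ) : mulL (B * C) = mulL B * mulL C := by
  ext H : 1; simp [ContinuousLinearMap.mul_apply, mul_assoc]

lemma mulR_mul (B C : Matrix n n ℂ) : mulR (B * C) = mulR C * mulR B := by
  ext H : 1; simp [ContinuousLinearMap.mul_apply, mul_assoc]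

lemma mulL_pow (B : Matrix n n ℂ) (k : ℕ) : mulL (B ^ k) = mulL B ^ k := by
  induction k with
  | zero => simpa using mulL_one
  | succ k ih => rw [pow_succ, pow_succ, mulL_mul, ih]

lemma mulR_pow (B : Matrix n n ℂ) (k : ℕ) : mulR (B ^ k) = mulR B ^ k := by
  induction k with
  | zero => simpa using mulR_one
  | succ k ih => rw [pow_succ, pow_succ', mulR_mul, ih]

lemma mulL_algebraMap (c : ℂ) :
    mulL (algebraMap ℂ (Matrix n n ℂ) c) = algebraMap ℂ (Matrix n n ℂ →L[ℂ] Matrix n n ℂ) c := by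
  ext H : 1
  simp [Algebra.algebraMap_eq_smul_one, smul_mul_assoc]

lemma mulR_algebraMap (c : ℂ) :
    mulR (algebraMap ℂ (Matrix n n ℂ) c) = algebraMap ℂ (Matrix n n ℂ →L[ℂ] Matrix n n ℂ) c := by
  ext H : 1
  simp [Algebra.algebraMap_eq_smul_one, mul_smul_comm]

lemma mulL_aeval (B : Matrix n n ℂ) (q : ℂ[X]) :
    mulL (aeval B q) = aeval (mulL B) q := by
  induction q using Polynomial.induction_on' with
  | add p q hp hq => rw [map_add, map_add, mulL_add, hp, hq]
  | monomial m a =>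
      rw [aeval_monomial, aeval_monomial, mulL_mul, mulL_algebraMap, mulL_pow]

lemma mulR_aeval (B : Matrix n n ℂ) (q : ℂ[X]) :
    mulR (aeval B q) = aeval (mulR B) q := by
  induction q using Polynomial.induction_on' with
  | add p q hp hq => rw [map_add, map_add, mulR_add, hp, hq]
  | monomial m a =>
      rw [aeval_monomial, aeval_monomial, mulR_mul, mulR_algebraMap, mulR_pow,
        Algebra.commutes]

lemma norm_mulL_le (B : Matrix n n ℂ) : ‖mulL B‖ ≤ ‖B‖ :=
  ContinuousLinearMap.opNorm_mul_apply_le ℂ _ B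

lemma norm_mulR_le (B : Matrix n n ℂ) : ‖mulR B‖ ≤ ‖B‖ :=
  ContinuousLinearMap.opNorm_le_bound _ (norm_nonneg _) fun H => by
    rw [mulR_apply]
    calc ‖H * B‖ ≤ ‖H‖ * ‖B‖ := norm_mul_le _ _
    _ = ‖B‖ * ‖H‖ := mul_comm _ _

lemma norm_pow_le_of_le {f : Matrix n n ℂ →L[ℂ] Matrix n n ℂ} {c : ℝ} (h : ‖f‖ ≤ c) (i : ℕ) :
    ‖f ^ i‖ ≤ c ^ i := by
  have hc : 0 ≤ c := le_trans (norm_nonneg _) h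
  induction i with
  | zero => simpa [ContinuousLinearMap.one_def] using ContinuousLinearMap.norm_id_le
  | succ i ih =>
      rw [pow_succ, pow_succ]
      exact le_trans (norm_mul_le _ _) (mul_le_mul ih h (norm_nonneg _) (pow_nonneg hc _))

lemma exists_inverse_poly (x : Matrix n n ℂ) (hx : IsUnit x) :
    ∃ q : ℂ[X], x * aeval x q = 1 ∧ aeval x q * x = 1 := by
  have hdet : x.det ≠ 0 := by
    intro h0
    rw [Matrix.isUnit_iff_isUnit_det, h0] at hx
    simp at hx
  have hc : x.charpoly.coeff 0 ≠ 0 := by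
    intro h0
    have := Matrix.det_eq_sign_charpoly_coeff x
    rw [h0, mul_zero] at this
    exact hdet this
  set c := x.charpoly.coeff 0 with hcdef
  have key : x * aeval x x.charpoly.divX = algebraMap ℂ (Matrix n n ℂ) (-c) := by
    have h2 := congrArg (aeval x) (Polynomial.X_mul_divX_add (p := x.charpoly))
    rw [map_add, map_mul, aeval_X, aeval_C, Matrix.aeval_self_charpoly] at h2
    rw [map_neg]
    exact eq_neg_of_add_eq_zero_left h2
  have key2 : aeval x x.charpoly.divX * x = algebraMap ℂ (Matrix n n ℂ) (-c) := by
    calc aeval x x.charpoly.divX * x = aeval x (x.charpoly.divX * X) := by rw [map_mul, aeval_X]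
    _ = aeval x (X * x.charpoly.divX) := by rw [mul_comm]
    _ = x * aeval x x.charpoly.divX := by rw [map_mul, aeval_X]
    _ = _ := key
  have hnc : (-c : ℂ) ≠ 0 := neg_ne_zero.mpr hc
  refine ⟨(-c)⁻¹ • x.charpoly.divX, ?_, ?_⟩
  · rw [map_smul, mul_smul_comm, key, Algebra.algebraMap_eq_smul_one, smul_smul,
      inv_mul_cancel₀ hnc, one_smul]
  · rw [map_smul, smul_mul_assoc, key2, Algebra.algebraMap_eq_smul_one, smul_smul,
      inv_mul_cancel₀ hnc, one_smul]

noncomputable def Pd (x : Matrix n n ℂ) (k : ℕ) : Matrix n n ℂ →L[ℂ] Matrix n n ℂ :=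
  ∑ i ∈ Finset.range k, mulL x ^ i * mulR x ^ (k - 1 - i)

lemma Pd_apply (x H : Matrix n n ℂ) (k : ℕ) :
    Pd x k H = ∑ i ∈ Finset.range k, x ^ i * (H * x ^ (k - 1 - i)) := by
  rw [Pd, ContinuousLinearMap.sum_apply]
  refine Finset.sum_congr rfl fun i hi => ?_
  rw [ContinuousLinearMap.mul_apply, ← mulL_pow, ← mulR_pow, mulL_apply, mulR_apply]

lemma hasFDerivAt_pow (k : ℕ) (x : Matrix n n ℂ) :
    HasFDerivAt (fun X : Matrix n n ℂ => X ^ k) (Pd x k) x := by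
  induction k with
  | zero =>
      have h0 : Pd x 0 = 0 := by simp [Pd]
      rw [h0]
      simp only [pow_zero]
      exact hasFDerivAt_const 1 x
  | succ k ih =>
      have h := (hasFDerivAt_id x).mul' ih
      have hfun : (id * fun y : Matrix n n ℂ => y ^ k) = fun y => y ^ (k + 1) :=
        funext fun y => by rw [Pi.mul_apply, id, ← pow_succ']
      rw [hfun] at h
      refine h.congr_fderiv ?_
      symm
      ext H : 1
      rw [ContinuousLinearMap.add_apply, ContinuousLinearMap.smul_apply,
        ContinuousLinearMap.smul_apply, ContinuousLinearMap.id_apply,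
        smul_eq_mul, op_smul_eq_mul, Pd_apply, Pd_apply, Finset.mul_sum,
        Finset.sum_range_succ' (fun i => x ^ i * (H * x ^ (k + 1 - 1 - i))) k]
      congr 1
      · refine Finset.sum_congr rfl fun i hi => ?_
        rw [show k + 1 - 1 - (i + 1) = k - 1 - i by omega, pow_succ', mul_assoc, id]
      · simp

lemma norm_Pd_le (x : Matrix n n ℂ) (k : ℕ) {R : ℝ} (hR0 : 0 ≤ R) (hx : ‖x‖ ≤ R) :
    ‖Pd x k‖ ≤ k * R ^ (k - 1) := by
  calc ‖Pd x k‖ ≤ ∑ i ∈ Finset.range k, ‖mulL x ^ i * mulR x ^ (k - 1 - i)‖ :=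
        norm_sum_le _ _
  _ ≤ ∑ _i ∈ Finset.range k, R ^ (k - 1) := by
      refine Finset.sum_le_sum fun i hi => ?_
      have h1 : ‖mulL x ^ i‖ ≤ R ^ i :=
        norm_pow_le_of_le (le_trans (norm_mulL_le x) hx) i
      have h2 : ‖mulR x ^ (k - 1 - i)‖ ≤ R ^ (k - 1 - i) :=
        norm_pow_le_of_le (le_trans (norm_mulR_le x) hx) _
      calc ‖mulL x ^ i * mulR x ^ (k - 1 - i)‖ ≤ ‖mulL x ^ i‖ * ‖mulR x ^ (k - 1 - i)‖ :=
            norm_mul_le _ _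
      _ ≤ R ^ i * R ^ (k - 1 - i) :=
            mul_le_mul h1 h2 (norm_nonneg _) (pow_nonneg hR0 _)
      _ = R ^ (k - 1) := by
            have hik : i < k := Finset.mem_range.mp hi
            rw [← pow_add]
            congr 1
            omega
  _ = k * R ^ (k - 1) := by simp [Finset.sum_const, nsmul_eq_mul]

lemma norm_smul_Pd_le (x : Matrix n n ℂ) (k : ℕ) {R : ℝ} (hR0 : 0 ≤ R) (hx : ‖x‖ ≤ R) :
    ‖(k.factorial : ℂ)⁻¹ • Pd x k‖ ≤ (k : ℝ) * R ^ (k - 1) / (k.factorial : ℝ) := by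
  rw [norm_smul ((k.factorial : ℂ))⁻¹ (Pd x k)]
  have h1 : ‖((k.factorial : ℂ))⁻¹‖ = ((k.factorial : ℝ))⁻¹ := by
    rw [norm_inv]
    norm_cast
  rw [h1, div_eq_inv_mul]
  refine mul_le_mul_of_nonneg_left ?_ (by positivity)
  exact norm_Pd_le x k hR0 hx

lemma summable_u (R : ℝ) :
    Summable (fun k : ℕ => (k : ℝ) * R ^ (k - 1) / (k.factorial : ℝ)) := by
  rw [← summable_nat_add_iff 1]
  refine (Real.summable_pow_div_factorial R).congr fun k => ?_
  have h1 : ((k.factorial : ℝ)) ≠ 0 := by positivity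
  rw [Nat.factorial_succ]
  push_cast
  field_simp

lemma exp_hasFDerivAt (A : Matrix n n ℂ) :
    HasFDerivAt (NormedSpace.exp) (∑' k : ℕ, ((k.factorial : ℂ)⁻¹ • Pd A k)) A := by
  set R : ℝ := ‖A‖ + 1 with hR
  have hR0 : (0 : ℝ) ≤ R := by positivity
  have hball : A ∈ Metric.ball (0 : Matrix n n ℂ) R := by
    simp [hR, mem_ball_zero_iff]
  have hf : ∀ (k : ℕ) (x : Matrix n n ℂ), x ∈ Metric.ball (0 : Matrix n n ℂ) R →
      HasFDerivAt (fun X : Matrix n n ℂ => (k.factorial : ℂ)⁻¹ • X ^ k)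
        ((k.factorial : ℂ)⁻¹ • Pd x k) x :=
    fun k x _ => by exact (hasFDerivAt_pow k x).const_smul ((k.factorial : ℂ)⁻¹)
  have hf' : ∀ (k : ℕ) (x : Matrix n n ℂ), x ∈ Metric.ball (0 : Matrix n n ℂ) R →
      ‖(k.factorial : ℂ)⁻¹ • Pd x k‖ ≤ (k : ℝ) * R ^ (k - 1) / (k.factorial : ℝ) :=
    fun k x hx => norm_smul_Pd_le x k hR0 (le_of_lt (mem_ball_zero_iff.mp hx))
  have hsum0 : Summable fun k : ℕ => (k.factorial : ℂ)⁻¹ • A ^ k := expSeries_summable' A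
  have key := hasFDerivAt_tsum_of_isPreconnected (summable_u R) Metric.isOpen_ball
    ((convex_ball _ _).isPreconnected) hf hf' hball hsum0 hball
  rw [exp_eq_tsum (𝕂 := ℂ)]
  exact key

/-- On a finite-dimensional commutative algebra over `ℂ`, every non-unit is killed by some
character. -/
lemma exists_algHom_of_not_isUnit {B : Type*} [CommRing B] [Algebra ℂ B]
    [FiniteDimensional ℂ B] {x : B} (hx : ¬ IsUnit x) :
    ∃ χ : B →ₐ[ℂ] ℂ, χ x = 0 := by
  obtain ⟨m, hm, hmem⟩ := exists_max_ideal_of_mem_nonunits (mem_nonunits_iff.mpr hx)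
  haveI := hm
  letI : Field (B ⧸ m) := Ideal.Quotient.field m
  haveI : FiniteDimensional ℂ (B ⧸ m) :=
    Module.Finite.of_surjective (Ideal.Quotient.mkₐ ℂ m).toLinearMap
      (Ideal.Quotient.mkₐ_surjective ℂ m)
  have hsurj : Function.Surjective (algebraMap ℂ (B ⧸ m)) :=
    (IsAlgClosed.algebraMap_bijective_of_isIntegral (k := ℂ) (K := B ⧸ m)).2
  have hinj : Function.Injective (algebraMap ℂ (B ⧸ m)) := (algebraMap ℂ (B ⧸ m)).injective
  let e : ℂ ≃ₐ[ℂ] (B ⧸ m) := AlgEquiv.ofBijective (Algebra.ofId ℂ (B ⧸ m)) ⟨hinj, hsurj⟩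
  refine ⟨e.symm.toAlgHom.comp (Ideal.Quotient.mkₐ ℂ m), ?_⟩
  have hq0 : Ideal.Quotient.mkₐ ℂ m x = 0 := Ideal.Quotient.eq_zero_iff_mem.mpr hmem
  show e.symm (Ideal.Quotient.mkₐ ℂ m x) = 0
  rw [hq0, map_zero]

end ExpDerivAux

set_option maxHeartbeats 2000000 in
set_option synthInstance.maxHeartbeats 1000000 in
open ExpDerivAux Polynomial in
/-- If no two eigenvalues of a square complex matrix `A` differ by `2πi` times a nonzero
integer, then the matrix exponential is Fréchet differentiable at `A` with bijective
derivative: there is a continuous linear self-equivalence `D` of the matrix space which is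
the Fréchet derivative of `exp` at `A`. -/
theorem exp_hasFDerivAt_equiv_of_good_eigenvalues
    {n : Type*} [Fintype n] [DecidableEq n] (A : Matrix n n ℂ)
    (h : ∀ μ ∈ spectrum ℂ A, ∀ ν ∈ spectrum ℂ A, ∀ k : ℤ, k ≠ 0 →
      μ - ν ≠ 2 * π * Complex.I * k) :
    ∃ D : Matrix n n ℂ ≃L[ℂ] Matrix n n ℂ,
      HasFDerivAt (NormedSpace.exp : Matrix n n ℂ → Matrix n n ℂ) (D : Matrix n n ℂ →L[ℂ] Matrix n n ℂ) A := by
  classical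
  letI : UniformSpace (Matrix n n ℂ) :=
    (inferInstance : SeminormedAddCommGroup (Matrix n n ℂ)).toUniformSpace
  letI : TopologicalSpace (Matrix n n ℂ) := matTop
  set l := mulL A with hl
  set r := mulR A with hr
  set C₀ : Subalgebra ℂ (Matrix n n ℂ →L[ℂ] Matrix n n ℂ) := Algebra.adjoin ℂ {l, r} with hC₀
  have hcomm : ∀ a ∈ ({l, r} : Set (Matrix n n ℂ →L[ℂ] Matrix n n ℂ)),
      ∀ b ∈ ({l, r} : Set (Matrix n n ℂ →L[ℂ] Matrix n n ℂ)), a * b = b * a := by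
    have hlr : l * r = r * l := by
      ext H : 1
      simp [hl, hr, ContinuousLinearMap.mul_apply, mul_assoc]
    intro a ha b hb
    simp only [Set.mem_insert_iff, Set.mem_singleton_iff] at ha hb
    rcases ha with rfl | rfl <;> rcases hb with rfl | rfl
    · rfl
    · exact hlr
    · exact hlr.symm
    · rfl
  letI : CommRing C₀ := Algebra.adjoinCommRingOfComm ℂ hcomm
  have hlmem : l ∈ C₀ := Algebra.subset_adjoin (by simp)
  have hrmem : r ∈ C₀ := Algebra.subset_adjoin (by simp)
  haveI hfdE : FiniteDimensional ℂ (Matrix n n ℂ →L[ℂ] Matrix n n ℂ) :=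
    (LinearMap.toContinuousLinearMap :
      (Matrix n n ℂ →ₗ[ℂ] Matrix n n ℂ) ≃ₗ[ℂ] (Matrix n n ℂ →L[ℂ] Matrix n n ℂ)).finiteDimensional
  haveI hfdC : FiniteDimensional ℂ C₀ :=
    FiniteDimensional.of_injective (Subalgebra.toSubmodule C₀).subtype Subtype.coe_injective
  -- the candidate derivative
  set D₀ : Matrix n n ℂ →L[ℂ] Matrix n n ℂ :=
    ∑' k : ℕ, ((k.factorial : ℂ)⁻¹ • Pd A k) with hD₀
  have hderiv : HasFDerivAt (NormedSpace.exp) D₀ A := exp_hasFDerivAt A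
  set R : ℝ := ‖A‖ + 1 with hRdef
  have hR0 : (0 : ℝ) ≤ R := by positivity
  have hAR : ‖A‖ ≤ R := by simp [hRdef]
  have hcmem : ∀ k : ℕ, (k.factorial : ℂ)⁻¹ • Pd A k ∈ C₀ := by
    intro k
    refine Subalgebra.smul_mem _ ?_ _
    refine Subalgebra.sum_mem _ fun i hi => ?_
    exact mul_mem (pow_mem hlmem i) (pow_mem hrmem (k - 1 - i))
  have hsummc : Summable (fun k : ℕ => (k.factorial : ℂ)⁻¹ • Pd A k) :=
    Summable.of_norm_bounded (summable_u R) fun k => norm_smul_Pd_le A k hR0 hAR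
  have hDmem : D₀ ∈ C₀ := by
    have hclosed : IsClosed ((C₀ : Set (Matrix n n ℂ →L[ℂ] Matrix n n ℂ))) := by
      have := Submodule.closed_of_finiteDimensional (Subalgebra.toSubmodule C₀)
      simpa using this
    refine hclosed.mem_of_tendsto hsummc.hasSum.tendsto_sum_nat
      (Filter.Eventually.of_forall fun N => ?_)
    exact Subalgebra.sum_mem _ fun k _ => hcmem k
  -- D₀ is a unit in the commutative subalgebra C₀
  have hunit : IsUnit (⟨D₀, hDmem⟩ : C₀) := by
    by_contra hnu
    obtain ⟨χ, hχD⟩ := exists_algHom_of_not_isUnit hnu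
    set μ := χ ⟨l, hlmem⟩ with hμ
    set ν := χ ⟨r, hrmem⟩ with hν
    haveI : IsTopologicalAddGroup ↥C₀ :=
      inferInstanceAs (IsTopologicalAddGroup ↥(Subalgebra.toSubmodule C₀))
    haveI : ContinuousSMul ℂ ↥C₀ :=
      inferInstanceAs (ContinuousSMul ℂ ↥(Subalgebra.toSubmodule C₀))
    have hχcont : Continuous χ := χ.toLinearMap.continuous_of_finiteDimensional
    -- spectrum membership of μ
    have hμspec : μ ∈ spectrum ℂ A := by
      by_contra hns
      rw [spectrum.notMem_iff] at hns
      obtain ⟨q, hq1, hq2⟩ := exists_inverse_poly _ hns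
      set x₀ := algebraMap ℂ (Matrix n n ℂ) μ - A with hx₀
      set z : C₀ := algebraMap ℂ C₀ μ - ⟨l, hlmem⟩ with hzdef
      have hzcoe : (z : Matrix n n ℂ →L[ℂ] Matrix n n ℂ) = mulL x₀ := by
        rw [hx₀, mulL_sub, mulL_algebraMap]
        simp [hzdef, hl]
      set w : C₀ := aeval z q with hwdef
      have hwcoe : (w : Matrix n n ℂ →L[ℂ] Matrix n n ℂ) = mulL (aeval x₀ q) := by
        rw [mulL_aeval, hwdef]
        have h1 : ((aeval z q : C₀) : Matrix n n ℂ →L[ℂ] Matrix n n ℂ)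
            = aeval (C₀.val z) q := (aeval_algHom_apply C₀.val z q).symm
        rw [h1, show C₀.val z = mulL x₀ from hzcoe]
      have hz1 : z * w = 1 := by
        apply Subtype.coe_injective
        push_cast
        rw [hzcoe, hwcoe, ← mulL_mul, hq1, mulL_one]
      have hzu : IsUnit z := IsUnit.of_mul_eq_one _ hz1
      have h0 : χ z = 0 := by
        rw [hzdef, map_sub, AlgHom.commutes, Algebra.algebraMap_self, RingHom.id_apply, hμ,
          sub_self]
      have := hzu.map χ
      rw [h0] at this
      exact this.ne_zero rfl
    -- spectrum membership of ν
    have hνspec : ν ∈ spectrum ℂ A := by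
      by_contra hns
      rw [spectrum.notMem_iff] at hns
      obtain ⟨q, hq1, hq2⟩ := exists_inverse_poly _ hns
      set x₀ := algebraMap ℂ (Matrix n n ℂ) ν - A with hx₀
      set z : C₀ := algebraMap ℂ C₀ ν - ⟨r, hrmem⟩ with hzdef
      have hzcoe : (z : Matrix n n ℂ →L[ℂ] Matrix n n ℂ) = mulR x₀ := by
        rw [hx₀, mulR_sub, mulR_algebraMap]
        simp [hzdef, hr]
      set w : C₀ := aeval z q with hwdef
      have hwcoe : (w : Matrix n n ℂ →L[ℂ] Matrix n n ℂ) = mulR (aeval x₀ q) := by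
        rw [mulR_aeval, hwdef]
        have h1 : ((aeval z q : C₀) : Matrix n n ℂ →L[ℂ] Matrix n n ℂ)
            = aeval (C₀.val z) q := (aeval_algHom_apply C₀.val z q).symm
        rw [h1, show C₀.val z = mulR x₀ from hzcoe]
      have hz1 : z * w = 1 := by
        apply Subtype.coe_injective
        push_cast
        rw [hzcoe, hwcoe, ← mulR_mul, hq2, mulR_one]
      have hzu : IsUnit z := IsUnit.of_mul_eq_one _ hz1
      have h0 : χ z = 0 := by
        rw [hzdef, map_sub, AlgHom.commutes, Algebra.algebraMap_self, RingHom.id_apply, hν,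
          sub_self]
      have := hzu.map χ
      rw [h0] at this
      exact this.ne_zero rfl
    -- partial sums of the scalar series converge to χ D₀ = 0
    set a : ℕ → ℂ :=
      fun k => (k.factorial : ℂ)⁻¹ * ∑ i ∈ Finset.range k, μ ^ i * ν ^ (k - 1 - i) with hadef
    have hTa : Filter.Tendsto (fun N => ∑ k ∈ Finset.range N, a k) Filter.atTop (nhds 0) := by
      set c' : ℕ → C₀ := fun k =>
        (k.factorial : ℂ)⁻¹ •
          ∑ i ∈ Finset.range k, (⟨l, hlmem⟩ : C₀) ^ i * (⟨r, hrmem⟩ : C₀) ^ (k - 1 - i)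
        with hc'def
      have hc'coe : ∀ k : ℕ,
          ((c' k : C₀) : Matrix n n ℂ →L[ℂ] Matrix n n ℂ)
            = (k.factorial : ℂ)⁻¹ • Pd A k := by
        intro k
        rw [hc'def]
        push_cast
        rw [Pd]
      have hχc' : ∀ k, χ (c' k) = a k := by
        intro k
        rw [hc'def, hadef]
        rw [map_smul, map_sum]
        rw [smul_eq_mul]
        congr 1
        refine Finset.sum_congr rfl fun i hi => ?_
        rw [map_mul, map_pow, map_pow]
      have hts' : Filter.Tendsto (fun N => ∑ k ∈ Finset.range N, c' k) Filter.atTop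
          (nhds (⟨D₀, hDmem⟩ : C₀)) := by
        rw [Topology.IsInducing.subtypeVal.tendsto_nhds_iff]
        refine Filter.Tendsto.congr (fun N => ?_) hsummc.hasSum.tendsto_sum_nat
        show (∑ k ∈ Finset.range N, ((k.factorial : ℂ)⁻¹ • Pd A k))
          = ((∑ k ∈ Finset.range N, c' k : C₀) : Matrix n n ℂ →L[ℂ] Matrix n n ℂ)
        rw [show ((∑ k ∈ Finset.range N, c' k : C₀) : Matrix n n ℂ →L[ℂ] Matrix n n ℂ)
            = C₀.val (∑ k ∈ Finset.range N, c' k) from rfl, map_sum]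
        exact (Finset.sum_congr rfl fun k _ => (hc'coe k).symm)
      have hcomp := (hχcont.tendsto _).comp hts'
      rw [hχD] at hcomp
      refine hcomp.congr fun N => ?_
      simp only [Function.comp_apply]
      rw [map_sum]
      exact Finset.sum_congr rfl fun k _ => hχc' k
    -- now derive a contradiction
    rcases eq_or_ne μ ν with hEq | hNe
    · -- equal eigenvalue case: the sum is exp μ ≠ 0
      have h1 : HasSum (fun k : ℕ => (k.factorial : ℂ)⁻¹ • μ ^ k) (NormedSpace.exp μ) :=
        exp_series_hasSum_exp' μ
      have h2 : (fun k : ℕ => a (k + 1)) = fun k : ℕ => (k.factorial : ℂ)⁻¹ • μ ^ k := by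
        funext k
        simp only [hadef]
        have hsum : ∑ i ∈ Finset.range (k + 1), μ ^ i * ν ^ (k + 1 - 1 - i)
            = (k + 1 : ℕ) • μ ^ k := by
          rw [show ((k + 1 : ℕ) • μ ^ k) = ∑ _i ∈ Finset.range (k + 1), μ ^ k by
            rw [Finset.sum_const, Finset.card_range]]
          refine Finset.sum_congr rfl fun i hi => ?_
          have hik : i < k + 1 := Finset.mem_range.mp hi
          rw [← hEq, ← pow_add, show i + (k + 1 - 1 - i) = k by omega]
        rw [hsum, nsmul_eq_mul, smul_eq_mul, Nat.factorial_succ]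
        have hkf : ((k.factorial : ℂ)) ≠ 0 :=
          Nat.cast_ne_zero.mpr (Nat.factorial_ne_zero k)
        push_cast
        have hk1 : ((k : ℂ) + 1) ≠ 0 := by
          have h9 : ((k + 1 : ℕ) : ℂ) ≠ 0 := Nat.cast_ne_zero.mpr (Nat.succ_ne_zero k)
          push_cast at h9
          exact h9
        field_simp
      have h3 : HasSum (fun k : ℕ => a (k + 1)) (NormedSpace.exp μ) := by rw [h2]; exact h1
      have h4 : HasSum a (NormedSpace.exp μ + ∑ i ∈ Finset.range 1, a i) :=
        (hasSum_nat_add_iff 1).mp h3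
      have h5 : HasSum a (NormedSpace.exp μ) := by
        simpa [hadef] using h4
      have h6 := tendsto_nhds_unique hTa h5.tendsto_sum_nat
      rw [← Complex.exp_eq_exp_ℂ] at h6
      exact Complex.exp_ne_zero μ h6.symm
    · -- distinct eigenvalues: (μ - ν) * limit = exp μ - exp ν
      have hb : HasSum (fun k : ℕ => (k.factorial : ℂ)⁻¹ • (μ ^ k - ν ^ k))
          (NormedSpace.exp μ - NormedSpace.exp ν) := by
        have hs := (exp_series_hasSum_exp' (𝕂 := ℂ) μ).sub (exp_series_hasSum_exp' (𝕂 := ℂ) ν)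
        have heq : (fun k : ℕ => (k.factorial : ℂ)⁻¹ • μ ^ k - (k.factorial : ℂ)⁻¹ • ν ^ k)
            = fun k : ℕ => (k.factorial : ℂ)⁻¹ • (μ ^ k - ν ^ k) :=
          funext fun k => (smul_sub _ _ _).symm
        rw [heq] at hs
        exact hs
      have heq2 : (fun N => (∑ k ∈ Finset.range N, a k) * (μ - ν))
          = fun N => ∑ k ∈ Finset.range N, (k.factorial : ℂ)⁻¹ • (μ ^ k - ν ^ k) := by
        funext N
        rw [Finset.sum_mul]
        refine Finset.sum_congr rfl fun k _ => ?_
        rw [hadef, smul_eq_mul, mul_assoc, geom_sum₂_mul]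
      have hmul : Filter.Tendsto (fun N => (∑ k ∈ Finset.range N, a k) * (μ - ν))
          Filter.atTop (nhds ((0 : ℂ) * (μ - ν))) := hTa.mul_const _
      rw [heq2] at hmul
      have h00 := tendsto_nhds_unique hb.tendsto_sum_nat hmul
      rw [zero_mul] at h00
      rw [← Complex.exp_eq_exp_ℂ] at h00
      have hexp1 : Complex.exp (μ - ν) = 1 := by
        have hEqExp : Complex.exp μ = Complex.exp ν := sub_eq_zero.mp h00
        rw [Complex.exp_sub, hEqExp, div_self (Complex.exp_ne_zero ν)]
      obtain ⟨kk, hkk⟩ := Complex.exp_eq_one_iff.mp hexp1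
      have hkk0 : kk ≠ 0 := by
        rintro rfl
        simp only [Int.cast_zero, zero_mul] at hkk
        exact hNe (sub_eq_zero.mp hkk)
      exact h μ hμspec ν hνspec kk hkk0 (by rw [hkk]; ring)
  -- conclude: build the continuous linear equivalence
  obtain ⟨u, hu⟩ := hunit
  set vC : C₀ := ((u⁻¹ : C₀ˣ) : C₀) with hvC
  have hv1 : (⟨D₀, hDmem⟩ : C₀) * vC = 1 := by rw [← hu, hvC]; exact_mod_cast u.mul_inv
  have hv2 : vC * (⟨D₀, hDmem⟩ : C₀) = 1 := by rw [← hu, hvC]; exact_mod_cast u.inv_mul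
  have hv1E : D₀ * (vC : Matrix n n ℂ →L[ℂ] Matrix n n ℂ) = 1 := by
    have := congrArg (Subtype.val) hv1
    push_cast at this
    exact this
  have hv2E : (vC : Matrix n n ℂ →L[ℂ] Matrix n n ℂ) * D₀ = 1 := by
    have := congrArg (Subtype.val) hv2
    push_cast at this
    exact this
  refine ⟨ContinuousLinearEquiv.equivOfInverse D₀ (vC : Matrix n n ℂ →L[ℂ] Matrix n n ℂ)
    (fun x => ?_) (fun x => ?_), ?_⟩
  · have := ContinuousLinearMap.ext_iff.mp hv2E x
    rwa [ContinuousLinearMap.mul_apply, ContinuousLinearMap.one_apply] at this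
  · have := ContinuousLinearMap.ext_iff.mp hv1E x
    rwa [ContinuousLinearMap.mul_apply, ContinuousLinearMap.one_apply] at this
  · exact hderiv
end

section
/- Let R be a commutative ring, let M and M' be R-modules equipped with monotone (increasing) filtrations F : ℤ → Submodule R M and F' : ℤ → Submodule R M', and let f : M → M' be an R-linear map. Let N(M,F) ⊆ M ⊗_R R[T,T⁻¹] and N(M',F') ⊆ M' ⊗_R R[T,T⁻¹] be the associated Rees modules. Then the map f ⊗ id : M ⊗_R R[T,T⁻¹] → M' ⊗_R R[T,T⁻¹] carries N(M,F) into N(M',F') if and only if f is filtered, i.e. f maps F p into F' p for every p ∈ ℤ. -/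
open TensorProduct LaurentPolynomial

noncomputable section

/-- The Rees module of a filtration `F : ℤ → Submodule R M`: the `R[T]`-submodule of
`M ⊗[R] R[T,T⁻¹]` generated by the elements `x ⊗ T^p` with `x ∈ F p`; as a subset it is the
`R`-span of all the `T^k`-translates `x ⊗ T^(p+k)` (`k ∈ ℕ`) of those generators. -/
def ReesSubmodule {R M : Type*} [CommRing R] [AddCommGroup M] [Module R M]
    (F : ℤ → Submodule R M) :
    Submodule R (M ⊗[R] LaurentPolynomial R) :=
  Submodule.span R
    {z | ∃ (p : ℤ) (k : ℕ) (x : M), x ∈ F p ∧ z = x ⊗ₜ[R] (T (p + k) : LaurentPolynomial R)}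

/-- Coefficient extraction at degree `p`. -/
noncomputable def coeffAt {R M : Type*} [CommRing R] [AddCommGroup M] [Module R M] (p : ℤ) :
    (M ⊗[R] LaurentPolynomial R) →ₗ[R] M :=
  (TensorProduct.rid R M).toLinearMap ∘ₗ
    LinearMap.lTensor M ((Finsupp.lapply p : (ℤ →₀ R) →ₗ[R] R) ∘ₗ
      (AddMonoidAlgebra.coeffLinearEquiv R).toLinearMap)

lemma coeffAt_tmul_T {R M : Type*} [CommRing R] [AddCommGroup M] [Module R M] (p q : ℤ)
    (x : M) : coeffAt p (x ⊗ₜ[R] (T q : LaurentPolynomial R)) =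
      if q = p then x else 0 := by
  simp only [coeffAt, LinearMap.coe_comp, Function.comp_apply, LinearMap.lTensor_tmul,
    LinearEquiv.coe_coe, TensorProduct.rid_tmul, Finsupp.lapply_apply]
  change (Finsupp.single q (1:R) p) • x = _
  rw [Finsupp.single_apply]
  split <;> simp

/-- For monotone filtrations `F` on `M` and `F'` on `M'`, an `R`-linear map `f : M → M'`
is filtered (maps each `F p` into `F' p`) if and only if `f ⊗ id` carries the Rees module
`N(M,F)` into `N(M',F')`. -/
theorem rees_map_le_iff_filtered
    {R M M' : Type*} [CommRing R] [AddCommGroup M] [Module R M]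
    [AddCommGroup M'] [Module R M']
    (F : ℤ → Submodule R M) (F' : ℤ → Submodule R M')
    (hF : Monotone F) (hF' : Monotone F') (f : M →ₗ[R] M') :
    (ReesSubmodule F).map (LinearMap.rTensor (LaurentPolynomial R) f) ≤ ReesSubmodule F'
      ↔ ∀ p : ℤ, (F p).map f ≤ F' p := by
  constructor
  · intro h p y hy
    obtain ⟨x, hx, rfl⟩ := hy
    have hmem : (x ⊗ₜ[R] (T p : LaurentPolynomial R)) ∈ ReesSubmodule F := by
      apply Submodule.subset_span
      exact ⟨p, 0, x, hx, by simp⟩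
    have h2 : (f x) ⊗ₜ[R] (T p : LaurentPolynomial R) ∈ ReesSubmodule F' := by
      have := h ⟨_, hmem, rfl⟩
      simpa using this
    -- extract coefficient at p
    have hcoe : ∀ z ∈ ReesSubmodule F', coeffAt p z ∈ F' p := by
      intro z hz
      refine Submodule.span_induction ?_ (by simp) (fun a b _ _ ha hb => by
        simpa using (F' p).add_mem ha hb) (fun r a _ ha => by
        simpa using (F' p).smul_mem r ha) hz
      rintro z ⟨q, k, x', hx', rfl⟩
      rw [coeffAt_tmul_T]
      split
      · next heq =>
        exact hF' (by omega : q ≤ p) hx'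
      · exact (F' p).zero_mem
    have := hcoe _ h2
    rwa [coeffAt_tmul_T, if_pos rfl] at this
  · intro hfil
    rw [Submodule.map_le_iff_le_comap, ReesSubmodule, Submodule.span_le]
    rintro z ⟨p, k, x, hx, rfl⟩
    simp only [SetLike.mem_coe, Submodule.mem_comap, LinearMap.rTensor_tmul]
    exact Submodule.subset_span ⟨p, k, f x, hfil p ⟨x, hx, rfl⟩, rfl⟩

end
end
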